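/- arXiv:1308.3537 — 2 statements merged into one kernel-verified Lean document; each statement's English description precedes it below -/
import Mathlib

section
/- Let f : ℝ → ℝ be a continuous 2π-periodic function with exactly one sign change (transverse zero) in each period interval of length π, satisfying f(x+π) = -f(x), and whose zeros are exactly the integer multiples of π. Setting a_n = (1/π)∫₀^{2π} f(x) cos(nx) dx and b_n = -(1/π)∫₀^{2π} f(x) sin(nx) dx, one has |a_{n+2} - a_n| ≤ 2|b_1| for all n ≥ 1. -/
open Real MeasureTheory

theorem cosine_coefficient_difference_bound
    (f : ℝ → ℝ) (hf : Continuous f)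
    (hper : Function.Periodic f (2 * π))
    (hanti : ∀ x, f (x + π) = -f x)
    (hzero : ∀ x, f x = 0 ↔ ∃ m : ℤ, x = m * π)
    (hsign : (∀ x ∈ Set.Icc (0:ℝ) π, 0 ≤ f x) ∨ (∀ x ∈ Set.Icc (0:ℝ) π, f x ≤ 0))
    (a b : ℕ → ℝ)
    (ha : ∀ n, a n = (1 / π) * ∫ x in (0:ℝ)..(2 * π), f x * Real.cos (n * x))
    (hb : ∀ n, b n = -(1 / π) * ∫ x in (0:ℝ)..(2 * π), f x * Real.sin (n * x)) :
    ∀ n : ℕ, 1 ≤ n → |a (n + 2) - a n| ≤ 2 * |b 1| := by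
  intro n hn
  have hπ : (0:ℝ) < π := Real.pi_pos
  have h2π : (0:ℝ) ≤ 2 * π := by linarith
  set g : ℝ → ℝ := fun x => f x * Real.sin x with hg
  have hgc : Continuous g := hf.mul Real.continuous_sin
  -- constant sign of g on [0, 2π]
  have hgsign : (∀ x ∈ Set.Icc (0:ℝ) (2*π), 0 ≤ g x) ∨
      (∀ x ∈ Set.Icc (0:ℝ) (2*π), g x ≤ 0) := by
    have key : ∀ x ∈ Set.Icc (0:ℝ) (2*π), (∃ y ∈ Set.Icc (0:ℝ) π,
        g x = f y * Real.sin y) := by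
      intro x hx
      rcases le_or_gt x π with hx1 | hx1
      · exact ⟨x, ⟨hx.1, hx1⟩, rfl⟩
      · refine ⟨x - π, ⟨by linarith, by linarith [hx.2]⟩, ?_⟩
        have hfx : f x = -f (x - π) := by
          have := hanti (x - π); rw [sub_add_cancel] at this; exact this
        have hsx : Real.sin x = -Real.sin (x - π) := by
          rw [Real.sin_sub_pi]; ring
        simp only [hg, hfx, hsx]; ring
    rcases hsign with h | h
    · left; intro x hx
      obtain ⟨y, hy, hxy⟩ := key x hx
      rw [hxy]
      exact mul_nonneg (h y hy) (Real.sin_nonneg_of_nonneg_of_le_pi hy.1 hy.2)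
    · right; intro x hx
      obtain ⟨y, hy, hxy⟩ := key x hx
      rw [hxy]
      exact mul_nonpos_of_nonpos_of_nonneg (h y hy)
        (Real.sin_nonneg_of_nonneg_of_le_pi hy.1 hy.2)
  -- |∫ |g|| = |∫ g|
  have hIabs : (∫ x in (0:ℝ)..(2*π), |g x|) = |∫ x in (0:ℝ)..(2*π), g x| := by
    have huIcc : Set.uIcc (0:ℝ) (2*π) = Set.Icc 0 (2*π) := Set.uIcc_of_le h2π
    rcases hgsign with h | h
    · rw [intervalIntegral.integral_congr (g := g)
        (by rw [huIcc]; intro x hx; exact abs_of_nonneg (h x hx))]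
      rw [abs_of_nonneg (intervalIntegral.integral_nonneg h2π h)]
    · have h1 : (∫ x in (0:ℝ)..(2*π), |g x|) = ∫ x in (0:ℝ)..(2*π), -g x :=
        intervalIntegral.integral_congr
          (by rw [huIcc]; intro x hx; exact abs_of_nonpos (h x hx))
      have hnn : 0 ≤ ∫ x in (0:ℝ)..(2*π), -g x :=
        intervalIntegral.integral_nonneg h2π (fun u hu => neg_nonneg.2 (h u hu))
      rw [intervalIntegral.integral_neg] at hnn
      rw [h1, intervalIntegral.integral_neg,
        abs_of_nonpos (by linarith)]
  -- rewrite a (n+2) - a n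
  have hi1 : IntervalIntegrable (fun x => f x * Real.cos ((n+2 : ℕ) * x))
      volume 0 (2*π) :=
    (hf.mul (Real.continuous_cos.comp (continuous_const.mul continuous_id))).intervalIntegrable 0 (2*π)
  have hi2 : IntervalIntegrable (fun x => f x * Real.cos ((n : ℕ) * x))
      volume 0 (2*π) :=
    (hf.mul (Real.continuous_cos.comp (continuous_const.mul continuous_id))).intervalIntegrable 0 (2*π)
  have key : a (n+2) - a n
      = (1/π) * (-2 * ∫ x in (0:ℝ)..(2*π), g x * Real.sin (((n:ℝ)+1) * x)) := by
    rw [ha, ha, ← mul_sub, ← intervalIntegral.integral_sub hi1 hi2]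
    congr 1
    rw [← intervalIntegral.integral_const_mul]
    apply intervalIntegral.integral_congr
    intro x _
    have e := Real.cos_sub_cos (((n:ℝ)+2)*x) ((n:ℝ)*x)
    have e1 : ((((n:ℝ)+2)*x + (n:ℝ)*x))/2 = ((n:ℝ)+1)*x := by ring
    have e2 : ((((n:ℝ)+2)*x - (n:ℝ)*x))/2 = x := by ring
    rw [e1, e2] at e
    push_cast
    rw [← mul_sub, e]
    simp only [hg]; ring
  -- bound the integral
  have hbound : |∫ x in (0:ℝ)..(2*π), g x * Real.sin (((n:ℝ)+1) * x)|
      ≤ |∫ x in (0:ℝ)..(2*π), g x| := by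
    rw [← hIabs]
    calc |∫ x in (0:ℝ)..(2*π), g x * Real.sin (((n:ℝ)+1) * x)|
        ≤ ∫ x in (0:ℝ)..(2*π), |g x * Real.sin (((n:ℝ)+1) * x)| :=
          intervalIntegral.abs_integral_le_integral_abs h2π
      _ ≤ ∫ x in (0:ℝ)..(2*π), |g x| := by
          apply intervalIntegral.integral_mono_on h2π
          · exact ((hgc.mul (Real.continuous_sin.comp
              (continuous_const.mul continuous_id))).abs).intervalIntegrable 0 (2*π)
          · exact hgc.abs.intervalIntegrable 0 (2*π)
          · intro x _
            rw [abs_mul]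
            exact mul_le_of_le_one_right (abs_nonneg _) (abs_sin_le_one _)
  -- conclude
  have hb1 : |b 1| = (1/π) * |∫ x in (0:ℝ)..(2*π), g x| := by
    rw [hb]
    have : (fun x => f x * Real.sin ((1:ℕ) * x)) = g := by
      funext x; simp [hg]
    rw [this, abs_mul, abs_neg, abs_of_nonneg (by positivity : (0:ℝ) ≤ 1/π)]
  rw [key, hb1, abs_mul, abs_of_nonneg (by positivity : (0:ℝ) ≤ 1/π), abs_mul]
  have : |(-2 : ℝ)| = 2 := by norm_num
  rw [this]
  have hπ' : (0:ℝ) ≤ 1/π := by positivity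
  nlinarith [hbound, abs_nonneg (∫ x in (0:ℝ)..(2*π), g x)]
end

section
/- Let γ_t be a family of smooth closed curves on the unit sphere S² evolving by curve shortening flow, i.e. ∂γ/∂t = κN, with geodesic curvature κ(s,t), where s is arclength. If ∫_{γ₀} κ ds = 0, then ∫_{γ_t} κ ds = 0 for all t ≥ 0. (Equivalently: a smooth embedded area-bisecting curve on S² remains area-bisecting under curve shortening flow.) -/
open Real MeasureTheory

theorem area_bisecting_preserved_under_csf
    (κ ν : ℝ → ℝ → ℝ)
    (hκ : ContDiff ℝ (⊤ : ℕ∞) (fun p : ℝ × ℝ => κ p.1 p.2))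
    (hν : ContDiff ℝ (⊤ : ℕ∞) (fun p : ℝ × ℝ => ν p.1 p.2))
    (hκper : ∀ t x, κ t (x + 2 * π) = κ t x)
    (hνper : ∀ t x, ν t (x + 2 * π) = ν t x)
    (hνpos : ∀ t x, 0 < ν t x)
    (hκt : ∀ t x, deriv (fun t' => κ t' x) t =
      (1 / ν t x) * deriv (fun x' => (1 / ν t x') * deriv (fun y => κ t y) x') x
        + κ t x + (κ t x) ^ 3)
    (hνt : ∀ t x, deriv (fun t' => ν t' x) t = -(κ t x) ^ 2 * ν t x)
    (h0 : ∫ x in (0:ℝ)..(2 * π), κ 0 x * ν 0 x = 0) :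
    ∀ t, 0 ≤ t → ∫ x in (0:ℝ)..(2 * π), κ t x * ν t x = 0 := by
  -- slices
  have hκx : ∀ t, ContDiff ℝ (⊤ : ℕ∞) (fun x => κ t x) :=
    fun t => hκ.comp (contDiff_const.prodMk contDiff_id)
  have hνx : ∀ t, ContDiff ℝ (⊤ : ℕ∞) (fun x => ν t x) :=
    fun t => hν.comp (contDiff_const.prodMk contDiff_id)
  have hκT : ∀ x, ContDiff ℝ (⊤ : ℕ∞) (fun t => κ t x) :=
    fun x => hκ.comp (contDiff_id.prodMk contDiff_const)
  have hνT : ∀ x, ContDiff ℝ (⊤ : ℕ∞) (fun t => ν t x) :=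
    fun x => hν.comp (contDiff_id.prodMk contDiff_const)
  have νne : ∀ t x, ν t x ≠ 0 := fun t x => (hνpos t x).ne'
  set I : ℝ → ℝ := fun t => ∫ x in (0:ℝ)..(2 * π), κ t x * ν t x with hI
  set P : ℝ → ℝ → ℝ := fun t x => deriv (fun t' => κ t' x) t with hP
  set Q : ℝ → ℝ → ℝ := fun t x => deriv (fun t' => ν t' x) t with hQ
  set F' : ℝ → ℝ → ℝ := fun t x => P t x * ν t x + κ t x * Q t x with hF'
  -- HasDerivAt for partial derivatives in t
  have hPd : ∀ t x, HasDerivAt (fun t' => κ t' x) (P t x) t := fun t x =>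
    ((hκT x).differentiable (by simp) t).hasDerivAt
  have hQd : ∀ t x, HasDerivAt (fun t' => ν t' x) (Q t x) t := fun t x =>
    ((hνT x).differentiable (by simp) t).hasDerivAt
  have hFd : ∀ t x, HasDerivAt (fun t' => κ t' x * ν t' x) (F' t x) t := fun t x =>
    (hPd t x).mul (hQd t x)
  -- joint continuity of P, Q, F'
  have hPeq : ∀ t x, P t x = fderiv ℝ (fun p : ℝ × ℝ => κ p.1 p.2) (t, x) (1, 0) := by
    intro t x
    have h1 : HasDerivAt (fun t' => κ t' x)
        (fderiv ℝ (fun p : ℝ × ℝ => κ p.1 p.2) (t, x) (1, 0)) t :=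
      (((hκ.differentiable (by simp) (t, x)).hasFDerivAt).comp_hasDerivAt t
        ((hasDerivAt_id t).prodMk (hasDerivAt_const t x)) :)
    exact h1.deriv ▸ rfl
  have hQeq : ∀ t x, Q t x = fderiv ℝ (fun p : ℝ × ℝ => ν p.1 p.2) (t, x) (1, 0) := by
    intro t x
    have h1 : HasDerivAt (fun t' => ν t' x)
        (fderiv ℝ (fun p : ℝ × ℝ => ν p.1 p.2) (t, x) (1, 0)) t :=
      (((hν.differentiable (by simp) (t, x)).hasFDerivAt).comp_hasDerivAt t
        ((hasDerivAt_id t).prodMk (hasDerivAt_const t x)) :)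
    exact h1.deriv ▸ rfl
  have hPcont : Continuous (fun p : ℝ × ℝ => P p.1 p.2) := by
    have : Continuous fun p : ℝ × ℝ => fderiv ℝ (fun p : ℝ × ℝ => κ p.1 p.2) p (1, 0) :=
      (hκ.continuous_fderiv (by simp)).clm_apply continuous_const
    exact this.congr (fun p => (hPeq p.1 p.2).symm)
  have hQcont : Continuous (fun p : ℝ × ℝ => Q p.1 p.2) := by
    have : Continuous fun p : ℝ × ℝ => fderiv ℝ (fun p : ℝ × ℝ => ν p.1 p.2) p (1, 0) :=
      (hν.continuous_fderiv (by simp)).clm_apply continuous_const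
    exact this.congr (fun p => (hQeq p.1 p.2).symm)
  have hF'cont : Continuous (fun p : ℝ × ℝ => F' p.1 p.2) :=
    (hPcont.mul hν.continuous).add (hκ.continuous.mul hQcont)
  -- I has derivative ∫ F' t x dx at every t
  have hIderiv : ∀ t₀ : ℝ, HasDerivAt I (∫ x in (0:ℝ)..(2 * π), F' t₀ x) t₀ := by
    intro t₀
    have hK : IsCompact ((Set.Icc (t₀ - 1) (t₀ + 1)) ×ˢ (Set.uIcc (0:ℝ) (2 * π))) :=
      isCompact_Icc.prod isCompact_uIcc
    obtain ⟨C, hC⟩ := hK.exists_bound_of_continuousOn hF'cont.continuousOn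
    have hball : ∀ t ∈ Metric.ball t₀ 1, t ∈ Set.Icc (t₀ - 1) (t₀ + 1) := by
      intro t ht
      rw [Metric.mem_ball, Real.dist_eq] at ht
      constructor <;> [linarith [abs_lt.mp ht |>.1]; linarith [abs_lt.mp ht |>.2]]
    have := intervalIntegral.hasDerivAt_integral_of_dominated_loc_of_deriv_le
      (F := fun t x => κ t x * ν t x) (F' := F') (x₀ := t₀) (a := 0) (b := 2 * π)
      (bound := fun _ => C) (μ := volume) (Metric.ball_mem_nhds t₀ one_pos)
      (Filter.Eventually.of_forall fun t =>
        ((hκx t).continuous.mul (hνx t).continuous).aestronglyMeasurable)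
      (((hκx t₀).continuous.mul (hνx t₀).continuous).intervalIntegrable _ _)
      ((hF'cont.comp (continuous_const.prodMk continuous_id)).aestronglyMeasurable)
      (Filter.Eventually.of_forall fun x hx t ht => by
        have hxK : x ∈ Set.uIcc (0:ℝ) (2 * π) := Set.Ioc_subset_Icc_self hx
        exact hC (t, x) ⟨hball t ht, hxK⟩)
      (intervalIntegrable_const)
      (Filter.Eventually.of_forall fun x _ t _ => hFd t x)
    exact this.2
  -- compute the derivative integrand: F' t x = deriv (G t) x + κ t x * ν t x
  have key : ∀ t₀ : ℝ, (∫ x in (0:ℝ)..(2 * π), F' t₀ x) = I t₀ := by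
    intro t
    have hle : (1 : WithTop ℕ∞) ≤ ((⊤ : ℕ∞) : WithTop ℕ∞) := by
      exact_mod_cast (le_top : (1 : ℕ∞) ≤ ⊤)
    have h1 := (contDiff_infty_iff_deriv.mp ((hκx t).of_le (by simp))).2
    have hG : ContDiff ℝ _ (fun x => 1 / ν t x * deriv (fun y => κ t y) x) :=
      ((contDiff_const.div ((hνx t).of_le (by simp)) (νne t)).mul h1 :
      ContDiff ℝ _ (fun x => 1 / ν t x * deriv (fun y => κ t y) x))
    have hF'eq : ∀ x, F' t x =
        deriv (fun x' => 1 / ν t x' * deriv (fun y => κ t y) x') x + κ t x * ν t x := by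
      intro x
      show deriv (fun t' => κ t' x) t * ν t x + κ t x * deriv (fun t' => ν t' x) t = _
      rw [hκt t x, hνt t x]
      have hc : 1 / ν t x * ν t x = 1 := one_div_mul_cancel (νne t x)
      linear_combination deriv (fun x' => 1 / ν t x' * deriv (fun y => κ t y) x') x * hc
    have hνp : ν t (2 * π) = ν t 0 := by simpa using hνper t 0
    have hκp : deriv (fun y => κ t y) (2 * π) = deriv (fun y => κ t y) 0 := by
      have h2 : deriv (fun y => κ t (y + 2 * π)) 0 = deriv (fun y => κ t y) (0 + 2 * π) :=
        deriv_comp_add_const _ _ _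
      simp only [hκper] at h2
      simpa using h2.symm
    have hFTC :
        (∫ x in (0:ℝ)..(2 * π), deriv (fun x' => 1 / ν t x' * deriv (fun y => κ t y) x') x)
          = 0 := by
      rw [intervalIntegral.integral_deriv_eq_sub
        (fun x _ => (hG.differentiable (by simp)).differentiableAt)
        ((hG.continuous_deriv hle).intervalIntegrable _ _)]
      simp [hνp, hκp]
    calc (∫ x in (0:ℝ)..(2 * π), F' t x)
        = ∫ x in (0:ℝ)..(2 * π),
            (deriv (fun x' => 1 / ν t x' * deriv (fun y => κ t y) x') x + κ t x * ν t x) :=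
          intervalIntegral.integral_congr (fun x _ => hF'eq x)
      _ = (∫ x in (0:ℝ)..(2 * π),
            deriv (fun x' => 1 / ν t x' * deriv (fun y => κ t y) x') x)
          + ∫ x in (0:ℝ)..(2 * π), κ t x * ν t x :=
          intervalIntegral.integral_add
            ((hG.continuous_deriv hle).intervalIntegrable _ _)
            (((hκx t).continuous.mul (hνx t).continuous).intervalIntegrable _ _)
      _ = I t := by rw [hFTC, zero_add]
  -- so I' = I; conclude I ≡ 0
  have hIode : ∀ t, HasDerivAt I (I t) t := fun t => key t ▸ hIderiv t
  have hJ : ∀ t, HasDerivAt (fun t => Real.exp (-t) * I t) 0 t := by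
    intro t
    have h1 : HasDerivAt (fun t : ℝ => Real.exp (-t)) (-Real.exp (-t)) t := by
      simpa using ((hasDerivAt_id t).neg).exp
    have : HasDerivAt (fun t => Real.exp (-t) * I t) (-Real.exp (-t) * I t + Real.exp (-t) * I t) t :=
      h1.mul (hIode t)
    convert this using 1
    ring
  have hJconst : ∀ t : ℝ, Real.exp (-t) * I t = Real.exp (-(0:ℝ)) * I 0 :=
    fun t => is_const_of_deriv_eq_zero (fun s => (hJ s).differentiableAt)
      (fun s => (hJ s).deriv) t 0
  intro t _
  have := hJconst t
  rw [show I 0 = 0 from h0] at this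
  simp only [mul_zero] at this
  have hexp : Real.exp (-t) ≠ 0 := Real.exp_ne_zero _
  have : I t = 0 := by
    rcases mul_eq_zero.mp this with h | h
    · exact absurd h hexp
    · exact h
  exact this
end
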